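/- Let F(X) = (f₁(X),…,f_m(X)) with each f_i convex, and suppose F is Lipschitz: ‖F(X) − F(Y)‖ ≤ L(F)‖X − Y‖_F for all X, Y. Suppose strong duality holds for the problem: minimize f_τ(X) subject to f_i(X) ≤ 0 for i = 1,…,m, and that the step sizes satisfy 0 < inf_k δ_k ≤ sup_k δ_k < 2/L(F)². Then the sequence {X^k} defined by X^k = argmin_X { f_τ(X) + ⟨y^{k−1}, F(X)⟩ }, y^k = [y^{k−1} + δ_k F(X^k)]₊, started from y⁰ = 0, converges to the unique solution of the constrained problem. -/

import Mathlib

open Matrix Filter Topology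

noncomputable def frob {n₁ n₂ : ℕ} (X : Matrix (Fin n₁) (Fin n₂) ℝ) : ℝ :=
  Real.sqrt (∑ i, ∑ j, (X i j) ^ 2)

noncomputable def mInner {n₁ n₂ : ℕ} (X Y : Matrix (Fin n₁) (Fin n₂) ℝ) : ℝ :=
  ∑ i, ∑ j, X i j * Y i j

noncomputable def singVal {n₁ n₂ : ℕ} (X : Matrix (Fin n₁) (Fin n₂) ℝ) (j : Fin n₂) : ℝ :=
  Real.sqrt ((show (Xᵀ * X).IsHermitian by
    simpa [Matrix.conjTranspose_eq_transpose_of_trivial] using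
      Matrix.isHermitian_conjTranspose_mul_self X).eigenvalues j)

noncomputable def nuclearNorm {n₁ n₂ : ℕ} (X : Matrix (Fin n₁) (Fin n₂) ℝ) : ℝ :=
  ∑ j, singVal X j

noncomputable def specNorm {n₁ n₂ : ℕ} (X : Matrix (Fin n₁) (Fin n₂) ℝ) : ℝ :=
  ⨆ j, singVal X j

noncomputable def ftau {n₁ n₂ : ℕ} (τ : ℝ) (X : Matrix (Fin n₁) (Fin n₂) ℝ) : ℝ :=
  τ * nuclearNorm X + (1 / 2) * frob X ^ 2

def projSet {n₁ n₂ : ℕ} (Ω : Finset (Fin n₁ × Fin n₂)) (X : Matrix (Fin n₁) (Fin n₂) ℝ) :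
    Matrix (Fin n₁) (Fin n₂) ℝ :=
  Matrix.of fun i j => if (i, j) ∈ Ω then X i j else 0

def IsSubgradAt {n₁ n₂ : ℕ} (f : Matrix (Fin n₁) (Fin n₂) ℝ → ℝ)
    (Z X₀ : Matrix (Fin n₁) (Fin n₂) ℝ) : Prop :=
  ∀ X, f X₀ + mInner Z (X - X₀) ≤ f X

noncomputable def eNorm {m : ℕ} (v : Fin m → ℝ) : ℝ := Real.sqrt (∑ i, v i ^ 2)

noncomputable def eInner {m : ℕ} (v w : Fin m → ℝ) : ℝ := ∑ i, v i * w i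

/-!
The objective `f_τ = τ‖·‖_* + ½‖·‖_F²` is 1-strongly convex: the nuclear norm is convex because
it is the support function `‖X‖_* = max {⟨X, Y⟩ : YᵀY ≼ 1}` of the spectral-norm unit ball.
Hence every Lagrangian `L(·, y)` with `y ≥ 0` is 1-strongly convex, and comparing `L(·, y^{k-1})`
at its minimiser `X^k` with `L(·, y*)` at its minimiser `X*` gives
`‖X^k - X*‖² ≤ ⟨y^{k-1} - y*, F(X*) - F(X^k)⟩`. Since `y* = [y* + δ F(X*)]₊` and the projection
onto the orthant is nonexpansive, the Lipschitz bound on `F` yields the Fejér-type descent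
`‖y^k - y*‖² + δ_k (2 - δ_k L²) ‖X^k - X*‖² ≤ ‖y^{k-1} - y*‖²`, so `∑ ‖X^k - X*‖² < ∞`.
-/

open Set

theorem sq_max_zero_sub_max_zero_le (a b : ℝ) : (max a 0 - max b 0) ^ 2 ≤ (a - b) ^ 2 :=
  sq_le_sq.mpr (abs_max_sub_max_le_abs a b 0)

theorem tendsto_zero_of_add_mul_le {s d : ℕ → ℝ} {c : ℝ} (hc : 0 < c) (hs : ∀ k, 0 ≤ s k)
    (hd : ∀ k, 0 ≤ d k) (hdesc : ∀ k, s (k + 1) + c * d k ≤ s k) :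
    Tendsto d atTop (𝓝 0) := by
  have htelescope : ∀ n, c * ∑ k ∈ Finset.range n, d k + s n ≤ s 0 := by
    intro n
    induction n with
    | zero => simp
    | succ n ih => rw [Finset.sum_range_succ]; linarith [hdesc n]
  refine (summable_of_sum_range_le (c := s 0 / c) hd fun n => ?_).tendsto_atTop_zero
  rw [le_div_iff₀' hc]
  linarith [htelescope n, hs n]

section Saddle

variable {α ι : Type*} [Fintype ι]

def lagrangian (φ : α → ℝ) (f : ι → α → ℝ) (y : ι → ℝ) (x : α) : ℝ :=
  φ x + ∑ i, y i * f i x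

structure IsSaddlePoint (φ : α → ℝ) (f : ι → α → ℝ) (xs : α) (ys : ι → ℝ) : Prop where
  nonneg : ∀ i, 0 ≤ ys i
  lagrangian_le : ∀ y : ι → ℝ, (∀ i, 0 ≤ y i) → lagrangian φ f y xs ≤ lagrangian φ f ys xs
  le_lagrangian : ∀ x, lagrangian φ f ys xs ≤ lagrangian φ f ys x

variable {φ : α → ℝ} {f : ι → α → ℝ} {xs : α} {ys : ι → ℝ}

namespace IsSaddlePoint

theorem isMinOn (h : IsSaddlePoint φ f xs ys) : IsMinOn (lagrangian φ f ys) univ xs :=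
  fun x _ => h.le_lagrangian x

theorem feasible (h : IsSaddlePoint φ f xs ys) (i : ι) : f i xs ≤ 0 := by
  classical
  have hmax := h.lagrangian_le (ys + Pi.single i 1) fun j =>
    add_nonneg (h.nonneg j) (by rw [Pi.single_apply]; split_ifs <;> norm_num)
  simpa [lagrangian, add_mul, Finset.sum_add_distrib, Pi.single_apply] using hmax

theorem sum_mul_eq_zero (h : IsSaddlePoint φ f xs ys) : ∑ i, ys i * f i xs = 0 := by
  classical
  have hmax := h.lagrangian_le 0 fun _ => le_rfl
  simp only [lagrangian, Pi.zero_apply, zero_mul, Finset.sum_const_zero, add_zero] at hmax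
  exact le_antisymm
    (Finset.sum_nonpos fun i _ => mul_nonpos_of_nonneg_of_nonpos (h.nonneg i) (h.feasible i))
    (by linarith)

theorem mul_eq_zero (h : IsSaddlePoint φ f xs ys) (i : ι) : ys i * f i xs = 0 := by
  classical
  exact (Finset.sum_eq_zero_iff_of_nonpos fun j _ =>
    mul_nonpos_of_nonneg_of_nonpos (h.nonneg j) (h.feasible j)).mp h.sum_mul_eq_zero i
    (Finset.mem_univ i)

theorem max_add_mul_eq (h : IsSaddlePoint φ f xs ys) {d : ℝ} (hd : 0 ≤ d) (i : ι) :
    max (ys i + d * f i xs) 0 = ys i := by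
  classical
  rcases _root_.mul_eq_zero.mp (h.mul_eq_zero i) with hy | hf
  · rw [hy, zero_add, max_eq_right (mul_nonpos_of_nonneg_of_nonpos hd (h.feasible i))]
  · rw [hf, mul_zero, add_zero, max_eq_left (h.nonneg i)]

theorem lagrangian_le_of_feasible (h : IsSaddlePoint φ f xs ys) {z : α}
    (hz : ∀ i, f i z ≤ 0) : lagrangian φ f ys z ≤ φ z :=
  add_le_of_nonpos_right <|
    Finset.sum_nonpos fun i _ => mul_nonpos_of_nonneg_of_nonpos (h.nonneg i) (hz i)

theorem le_of_feasible (h : IsSaddlePoint φ f xs ys) {z : α} (hz : ∀ i, f i z ≤ 0) :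
    φ xs ≤ φ z := by
  have := (h.le_lagrangian z).trans (h.lagrangian_le_of_feasible hz)
  rwa [lagrangian, h.sum_mul_eq_zero, add_zero] at this

end IsSaddlePoint

end Saddle

section StrongConvex

variable {E : Type*} [NormedAddCommGroup E] [NormedSpace ℝ E] {s : Set E} {μ : ℝ} {g : E → ℝ}

theorem StrongConvexOn.add_sq_norm_sub_le_of_isMinOn (hg : StrongConvexOn s μ g) {x z : E}
    (hx : IsMinOn g s x) (hxs : x ∈ s) (hzs : z ∈ s) :
    g x + μ / 2 * ‖z - x‖ ^ 2 ≤ g z := by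
  have hsegment : ∀ t ∈ Ioo (0 : ℝ) 1, g x + (1 - t) * (μ / 2 * ‖z - x‖ ^ 2) ≤ g z := by
    rintro t ⟨ht0, ht1⟩
    have hconv := hg.2 hxs hzs (sub_nonneg.mpr ht1.le) ht0.le (sub_add_cancel 1 t)
    have hmin := hx (hg.1 hxs hzs (sub_nonneg.mpr ht1.le) ht0.le (sub_add_cancel 1 t))
    rw [norm_sub_rev] at hconv
    simp only [smul_eq_mul, Set.mem_ofPred_eq] at hconv hmin
    nlinarith
  have hlim : Tendsto (fun t : ℝ => g x + (1 - t) * (μ / 2 * ‖z - x‖ ^ 2)) (𝓝[>] 0)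
      (𝓝 (g x + (1 - 0) * (μ / 2 * ‖z - x‖ ^ 2))) :=
    (Continuous.tendsto (by fun_prop) 0).mono_left nhdsWithin_le_nhds
  rw [sub_zero, one_mul] at hlim
  exact le_of_tendsto hlim (by filter_upwards [Ioo_mem_nhdsGT zero_lt_one] using hsegment)

theorem StrongConvexOn.lagrangian {ι : Type*} [Fintype ι] {f : ι → E → ℝ}
    (hg : StrongConvexOn s μ g) (hf : ∀ i, ConvexOn ℝ s (f i)) {y : ι → ℝ}
    (hy : ∀ i, 0 ≤ y i) : StrongConvexOn s μ (lagrangian g f y) := by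
  have hsum : ConvexOn ℝ s fun x => ∑ i, y i * f i x := by
    refine ⟨hg.1, fun x hx z hz a b ha hb hab => ?_⟩
    calc ∑ i, y i * f i (a • x + b • z)
        ≤ ∑ i, y i * (a • f i x + b • f i z) :=
          Finset.sum_le_sum fun i _ => mul_le_mul_of_nonneg_left ((hf i).2 hx hz ha hb hab) (hy i)
      _ = a • ∑ i, y i * f i x + b • ∑ i, y i * f i z := by
          simp only [smul_eq_mul, Finset.mul_sum, ← Finset.sum_add_distrib]
          exact Finset.sum_congr rfl fun i _ => by ring
  simpa [StrongConvexOn] using! hg.add hsum.uniformConvexOn_zero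

end StrongConvex

section Uzawa

variable {E ι : Type*} [NormedAddCommGroup E] [NormedSpace ℝ E] [Fintype ι]
  {φ : E → ℝ} {f : ι → E → ℝ} {μ : ℝ} {xs : E} {ys : ι → ℝ}

namespace IsSaddlePoint

theorem eq_of_feasible (hsp : IsSaddlePoint φ f xs ys)
    (hφ : StrongConvexOn univ μ φ) (hμ : 0 < μ) (hf : ∀ i, ConvexOn ℝ univ (f i)) {z : E}
    (hz : ∀ i, f i z ≤ 0) (hφz : φ z = φ xs) : z = xs := by
  have hgrowth := (hφ.lagrangian hf hsp.nonneg).add_sq_norm_sub_le_of_isMinOn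
    hsp.isMinOn (mem_univ xs) (mem_univ z)
  have hxs : lagrangian φ f ys xs = φ xs := by rw [lagrangian, hsp.sum_mul_eq_zero, add_zero]
  have hnorm : μ / 2 * ‖z - xs‖ ^ 2 ≤ 0 := by
    linarith [hsp.lagrangian_le_of_feasible hz]
  rw [← sub_eq_zero, ← norm_eq_zero, ← sq_eq_zero_iff]
  exact le_antisymm (nonpos_of_mul_nonpos_right hnorm (half_pos hμ)) (sq_nonneg _)

theorem mul_sq_norm_sub_le (hsp : IsSaddlePoint φ f xs ys)
    (hφ : StrongConvexOn univ μ φ) (hf : ∀ i, ConvexOn ℝ univ (f i)) {y : ι → ℝ}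
    (hy : ∀ i, 0 ≤ y i) {x : E} (hx : IsMinOn (lagrangian φ f y) univ x) :
    μ * ‖x - xs‖ ^ 2 ≤ ∑ i, (y i - ys i) * (f i xs - f i x) := by
  have hx_growth := (hφ.lagrangian hf hy).add_sq_norm_sub_le_of_isMinOn hx
    (mem_univ x) (mem_univ xs)
  have hxs_growth := (hφ.lagrangian hf hsp.nonneg).add_sq_norm_sub_le_of_isMinOn
    hsp.isMinOn (mem_univ xs) (mem_univ x)
  have hsum : ∑ i, (y i - ys i) * (f i xs - f i x) =
      (∑ i, y i * f i xs - ∑ i, y i * f i x) - (∑ i, ys i * f i xs - ∑ i, ys i * f i x) := by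
    simp only [← Finset.sum_sub_distrib]
    exact Finset.sum_congr rfl fun i _ => by ring
  rw [norm_sub_rev] at hx_growth
  simp only [lagrangian] at hx_growth hxs_growth
  linarith

theorem uzawa_step_le (hsp : IsSaddlePoint φ f xs ys)
    (hφ : StrongConvexOn univ μ φ) (hf : ∀ i, ConvexOn ℝ univ (f i)) {L : ℝ}
    (hLip : ∀ a b, ∑ i, (f i a - f i b) ^ 2 ≤ L ^ 2 * ‖a - b‖ ^ 2) {y : ι → ℝ}
    (hy : ∀ i, 0 ≤ y i) {x : E} (hx : IsMinOn (lagrangian φ f y) univ x) {δ : ℝ}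
    (hδ : 0 ≤ δ) :
    ∑ i, (max (y i + δ * f i x) 0 - ys i) ^ 2 + δ * (2 * μ - δ * L ^ 2) * ‖x - xs‖ ^ 2
      ≤ ∑ i, (y i - ys i) ^ 2 := by
  have hproj : ∑ i, (max (y i + δ * f i x) 0 - ys i) ^ 2
      ≤ ∑ i, ((y i - ys i) + δ * (f i x - f i xs)) ^ 2 :=
    Finset.sum_le_sum fun i _ => by
      calc (max (y i + δ * f i x) 0 - ys i) ^ 2
          = (max (y i + δ * f i x) 0 - max (ys i + δ * f i xs) 0) ^ 2 := by
            rw [hsp.max_add_mul_eq hδ]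
        _ ≤ _ := (sq_max_zero_sub_max_zero_le _ _).trans_eq (by ring)
  have hexpand : ∑ i, ((y i - ys i) + δ * (f i x - f i xs)) ^ 2
      = ∑ i, (y i - ys i) ^ 2 - 2 * δ * ∑ i, (y i - ys i) * (f i xs - f i x)
        + δ ^ 2 * ∑ i, (f i x - f i xs) ^ 2 := by
    simp only [Finset.mul_sum, ← Finset.sum_sub_distrib, ← Finset.sum_add_distrib]
    exact Finset.sum_congr rfl fun i _ => by ring
  have hcross := mul_le_mul_of_nonneg_left (hsp.mul_sq_norm_sub_le hφ hf hy hx)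
    (by positivity : 0 ≤ 2 * δ)
  have hlip := mul_le_mul_of_nonneg_left (hLip x xs) (sq_nonneg δ)
  linarith

theorem tendsto_uzawa (hsp : IsSaddlePoint φ f xs ys)
    (hφ : StrongConvexOn univ μ φ) (hf : ∀ i, ConvexOn ℝ univ (f i)) {L : ℝ}
    (hLip : ∀ a b, ∑ i, (f i a - f i b) ^ 2 ≤ L ^ 2 * ‖a - b‖ ^ 2) {δ : ℕ → ℝ} {a b : ℝ}
    (ha : 0 < a) (hbL : b * L ^ 2 < 2 * μ) (hδ : ∀ k, a ≤ δ k ∧ δ k ≤ b)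
    {x : ℕ → E} {y : ℕ → ι → ℝ} (hy0 : ∀ i, 0 ≤ y 0 i)
    (hx : ∀ k, IsMinOn (lagrangian φ f (y k)) univ (x (k + 1)))
    (hy : ∀ k, y (k + 1) = fun i => max (y k i + δ (k + 1) * f i (x (k + 1))) 0) :
    Tendsto x atTop (𝓝 xs) := by
  have hy_nonneg : ∀ k i, 0 ≤ y k i := by
    intro k
    induction k with
    | zero => exact hy0
    | succ k _ => intro i; rw [hy k]; exact le_max_right _ _
  set c := a * (2 * μ - b * L ^ 2)
  have hdesc : ∀ k, ∑ i, (y (k + 1) i - ys i) ^ 2 + c * ‖x (k + 1) - xs‖ ^ 2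
      ≤ ∑ i, (y k i - ys i) ^ 2 := by
    intro k
    obtain ⟨haδ, hδb⟩ := hδ (k + 1)
    have hstep := hsp.uzawa_step_le hφ hf hLip (hy_nonneg k) (hx k) (ha.le.trans haδ)
    have hδL : δ (k + 1) * L ^ 2 ≤ b * L ^ 2 := by gcongr
    have hc : c ≤ δ (k + 1) * (2 * μ - δ (k + 1) * L ^ 2) :=
      mul_le_mul haδ (by linarith) (by linarith) (by linarith)
    rw [hy k]
    linarith [mul_le_mul_of_nonneg_right hc (sq_nonneg ‖x (k + 1) - xs‖)]
  have hsq := tendsto_zero_of_add_mul_le (mul_pos ha (by linarith))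
    (fun k => Finset.sum_nonneg fun i _ => sq_nonneg (y k i - ys i))
    (fun k => sq_nonneg _) hdesc
  have hnorm : Tendsto (fun k => ‖x (k + 1) - xs‖) atTop (𝓝 0) := by
    simpa [Real.sqrt_sq (norm_nonneg _)] using hsq.sqrt
  exact (tendsto_add_atTop_iff_nat 1).mp (tendsto_iff_norm_sub_tendsto_zero.mpr hnorm)

end IsSaddlePoint

end Uzawa

section NuclearNorm

variable {n₁ n₂ : ℕ}

theorem mInner_eq_trace (X Y : Matrix (Fin n₁) (Fin n₂) ℝ) : mInner X Y = trace (Xᵀ * Y) := by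
  simp only [mInner, trace, diag, mul_apply, transpose_apply]
  exact Finset.sum_comm

theorem mInner_mul_right {V : Matrix (Fin n₂) (Fin n₂) ℝ} (hV : V * Vᵀ = 1)
    (X Y : Matrix (Fin n₁) (Fin n₂) ℝ) : mInner (X * V) (Y * V) = mInner X Y := by
  rw [mInner_eq_trace, mInner_eq_trace, transpose_mul, Matrix.mul_assoc, trace_mul_comm,
    Matrix.mul_assoc, Matrix.mul_assoc, hV, Matrix.mul_one, trace_mul_comm]

theorem isHermitian_transpose_mul_self (X : Matrix (Fin n₁) (Fin n₂) ℝ) :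
    (Xᵀ * X).IsHermitian := by
  simpa [conjTranspose_eq_transpose_of_trivial] using isHermitian_conjTranspose_mul_self X

theorem Matrix.IsHermitian.eigenvectorUnitary_transpose_mul {n : Type*} [Fintype n]
    [DecidableEq n] {A : Matrix n n ℝ} (hA : A.IsHermitian) :
    (hA.eigenvectorUnitary : Matrix n n ℝ)ᵀ * hA.eigenvectorUnitary = 1 := by
  simpa [star_eq_conjTranspose] using Unitary.coe_star_mul_self hA.eigenvectorUnitary

theorem Matrix.IsHermitian.eigenvectorUnitary_mul_transpose {n : Type*} [Fintype n]
    [DecidableEq n] {A : Matrix n n ℝ} (hA : A.IsHermitian) :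
    (hA.eigenvectorUnitary : Matrix n n ℝ) * (hA.eigenvectorUnitary : Matrix n n ℝ)ᵀ = 1 := by
  simpa [star_eq_conjTranspose] using Unitary.coe_mul_star_self hA.eigenvectorUnitary

theorem Matrix.IsHermitian.eigenvectorUnitary_transpose_mul_mul {n : Type*} [Fintype n]
    [DecidableEq n] {A : Matrix n n ℝ} (hA : A.IsHermitian) :
    (hA.eigenvectorUnitary : Matrix n n ℝ)ᵀ * A * hA.eigenvectorUnitary =
      diagonal hA.eigenvalues := by
  simpa [star_eq_conjTranspose, Function.comp_def] using hA.conjStarAlgAut_star_eigenvectorUnitary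

noncomputable def rightSingularVectors (X : Matrix (Fin n₁) (Fin n₂) ℝ) :
    Matrix (Fin n₂) (Fin n₂) ℝ :=
  (isHermitian_transpose_mul_self X).eigenvectorUnitary

theorem singVal_sq (X : Matrix (Fin n₁) (Fin n₂) ℝ) (j : Fin n₂) :
    singVal X j ^ 2 = (isHermitian_transpose_mul_self X).eigenvalues j :=
  Real.sq_sqrt ((posSemidef_conjTranspose_mul_self X).eigenvalues_nonneg j)

theorem transpose_mul_self_mul_rightSingularVectors (X : Matrix (Fin n₁) (Fin n₂) ℝ) :
    (X * rightSingularVectors X)ᵀ * (X * rightSingularVectors X) =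
      diagonal fun j => singVal X j ^ 2 := by
  simp only [singVal_sq]
  rw [← (isHermitian_transpose_mul_self X).eigenvectorUnitary_transpose_mul_mul, transpose_mul]
  simp only [rightSingularVectors, Matrix.mul_assoc]

theorem sum_sq_mul_rightSingularVectors (X : Matrix (Fin n₁) (Fin n₂) ℝ) (j : Fin n₂) :
    ∑ i, (X * rightSingularVectors X) i j ^ 2 = singVal X j ^ 2 := by
  simpa only [mul_apply, transpose_apply, diagonal_apply_eq, ← sq] using
    congrFun (congrFun (transpose_mul_self_mul_rightSingularVectors X) j) j

theorem sum_sq_mul_le_one_of_posSemidef {m n : Type*} [Fintype m] [Fintype n] [DecidableEq n]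
    {Y : Matrix m n ℝ} (hY : (1 - Yᵀ * Y).PosSemidef) {V : Matrix n n ℝ} (hV : Vᵀ * V = 1)
    (j : n) : ∑ i, (Y * V) i j ^ 2 ≤ 1 := by
  have hconj : Vᵀ * (1 - Yᵀ * Y) * V = 1 - (Y * V)ᵀ * (Y * V) := by
    rw [Matrix.mul_sub, Matrix.sub_mul, Matrix.mul_one, hV, transpose_mul]
    simp only [Matrix.mul_assoc]
  have hdiag := (hY.conjTranspose_mul_mul_same V).diag_nonneg (i := j)
  rw [conjTranspose_eq_transpose_of_trivial, hconj, Matrix.sub_apply, one_apply_eq,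
    mul_apply] at hdiag
  simpa only [transpose_apply, ← sq, sub_nonneg] using hdiag

theorem singVal_nonneg (X : Matrix (Fin n₁) (Fin n₂) ℝ) (j : Fin n₂) : 0 ≤ singVal X j :=
  Real.sqrt_nonneg _

theorem mInner_le_nuclearNorm (W : Matrix (Fin n₁) (Fin n₂) ℝ) {Y : Matrix (Fin n₁) (Fin n₂) ℝ}
    (hY : (1 - Yᵀ * Y).PosSemidef) : mInner W Y ≤ nuclearNorm W := by
  have hV := isHermitian_transpose_mul_self W
  rw [← mInner_mul_right hV.eigenvectorUnitary_mul_transpose W Y, mInner, Finset.sum_comm]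
  refine Finset.sum_le_sum fun j _ => ?_
  calc ∑ i, (W * rightSingularVectors W) i j * (Y * rightSingularVectors W) i j
      ≤ √(∑ i, (W * rightSingularVectors W) i j ^ 2) *
          √(∑ i, (Y * rightSingularVectors W) i j ^ 2) :=
        Real.sum_mul_le_sqrt_mul_sqrt _ _ _
    _ ≤ singVal W j * 1 := by
        rw [sum_sq_mul_rightSingularVectors, Real.sqrt_sq (singVal_nonneg W j)]
        exact mul_le_mul_of_nonneg_left (Real.sqrt_le_one.mpr
          (sum_sq_mul_le_one_of_posSemidef hY hV.eigenvectorUnitary_transpose_mul j))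
          (singVal_nonneg W j)
    _ = singVal W j := mul_one _

theorem exists_posSemidef_mInner_eq_nuclearNorm (X : Matrix (Fin n₁) (Fin n₂) ℝ) :
    ∃ Y : Matrix (Fin n₁) (Fin n₂) ℝ, (1 - Yᵀ * Y).PosSemidef ∧ mInner X Y = nuclearNorm X := by
  have hVV : (rightSingularVectors X)ᵀ * rightSingularVectors X = 1 :=
    (isHermitian_transpose_mul_self X).eigenvectorUnitary_transpose_mul
  have hVV' : rightSingularVectors X * (rightSingularVectors X)ᵀ = 1 :=
    (isHermitian_transpose_mul_self X).eigenvectorUnitary_mul_transpose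
  have hgram := transpose_mul_self_mul_rightSingularVectors X
  set V := rightSingularVectors X
  set σ := singVal X
  -- As `0⁻¹ = 0`, `diagonal σ⁻¹` is the pseudo-inverse of `Σ`: for an SVD `X = U Σ Vᵀ` the
  -- witness below is the partial isometry `U Vᵀ`.
  refine ⟨X * V * diagonal σ⁻¹ * Vᵀ, ?_, ?_⟩
  · have hYY : 1 - (X * V * diagonal σ⁻¹ * Vᵀ)ᵀ * (X * V * diagonal σ⁻¹ * Vᵀ) =
        V * (1 - diagonal fun j => σ⁻¹ j * σ j ^ 2 * σ⁻¹ j) * Vᵀ :=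
      calc _ = V * Vᵀ - V * (diagonal σ⁻¹ * ((X * V)ᵀ * (X * V)) * diagonal σ⁻¹) * Vᵀ := by
            simp only [hVV', transpose_mul, transpose_transpose, diagonal_transpose,
              Matrix.mul_assoc]
        _ = _ := by
            rw [hgram, diagonal_mul_diagonal, diagonal_mul_diagonal, Matrix.mul_sub,
              Matrix.sub_mul, Matrix.mul_one]
    have hdiag : (1 - diagonal fun j => σ⁻¹ j * σ j ^ 2 * σ⁻¹ j).PosSemidef := by
      rw [← diagonal_one, diagonal_sub]
      refine posSemidef_diagonal_iff.mpr fun j => ?_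
      rw [Pi.inv_apply, sq, ← _root_.mul_assoc (σ j)⁻¹, inv_mul_mul_self, sub_nonneg]
      exact mul_inv_le_one
    rw [hYY]
    simpa [conjTranspose_eq_transpose_of_trivial] using hdiag.mul_mul_conjTranspose_same V
  · rw [← mInner_mul_right hVV', Matrix.mul_assoc _ Vᵀ, hVV, Matrix.mul_one, mInner_eq_trace,
      ← Matrix.mul_assoc, hgram, diagonal_mul_diagonal, trace_diagonal, nuclearNorm]
    exact Finset.sum_congr rfl fun j _ => by rw [Pi.inv_apply, sq, mul_self_mul_inv]

theorem convexOn_nuclearNorm :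
    ConvexOn ℝ univ (nuclearNorm : Matrix (Fin n₁) (Fin n₂) ℝ → ℝ) := by
  refine ⟨convex_univ, fun P _ Q _ a b ha hb _ => ?_⟩
  obtain ⟨Y, hY, hdual⟩ := exists_posSemidef_mInner_eq_nuclearNorm (a • P + b • Q)
  calc nuclearNorm (a • P + b • Q) = a * mInner P Y + b * mInner Q Y := by
        rw [← hdual]
        simp only [mInner, Matrix.add_apply, Matrix.smul_apply, smul_eq_mul, add_mul,
          Finset.sum_add_distrib, Finset.mul_sum, _root_.mul_assoc]
    _ ≤ a * nuclearNorm P + b * nuclearNorm Q := by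
        gcongr <;> exact mInner_le_nuclearNorm _ hY

end NuclearNorm

section Frobenius

attribute [local instance] Matrix.frobeniusNormedAddCommGroup Matrix.frobeniusNormedSpace

variable {n₁ n₂ : ℕ}

theorem frob_eq_norm (X : Matrix (Fin n₁) (Fin n₂) ℝ) : frob X = ‖X‖ := by
  simp [frob, Matrix.frobenius_norm_def, Real.sqrt_eq_rpow, sq_abs]

theorem strongConvexOn_half_sq_frob :
    StrongConvexOn univ 1 fun X : Matrix (Fin n₁) (Fin n₂) ℝ => 1 / 2 * frob X ^ 2 := by
  refine ⟨convex_univ, fun X _ Y _ a b _ _ hab => le_of_eq ?_⟩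
  simp only [← frob_eq_norm, frob, smul_eq_mul]
  rw [Real.sq_sqrt (by positivity), Real.sq_sqrt (by positivity), Real.sq_sqrt (by positivity),
    Real.sq_sqrt (by positivity)]
  simp only [Finset.mul_sum, ← Finset.sum_sub_distrib, ← Finset.sum_add_distrib]
  refine Finset.sum_congr rfl fun i _ => Finset.sum_congr rfl fun j _ => ?_
  simp only [Matrix.add_apply, Matrix.smul_apply, Matrix.sub_apply, smul_eq_mul]
  obtain rfl := eq_sub_of_add_eq hab
  ring

theorem strongConvexOn_ftau {τ : ℝ} (hτ : 0 ≤ τ) :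
    StrongConvexOn univ 1 (ftau τ : Matrix (Fin n₁) (Fin n₂) ℝ → ℝ) := by
  unfold ftau
  simpa [StrongConvexOn, Pi.add_def] using!
    (convexOn_nuclearNorm.smul hτ).uniformConvexOn_zero.add strongConvexOn_half_sq_frob

end Frobenius

theorem sq_eNorm {m : ℕ} (v : Fin m → ℝ) : eNorm v ^ 2 = ∑ i, v i ^ 2 :=
  Real.sq_sqrt (Finset.sum_nonneg fun i _ => sq_nonneg (v i))

theorem uzawa_convergence_general (n₁ n₂ m : ℕ) (τ L : ℝ) (hτ : 0 < τ)
    (f : Fin m → Matrix (Fin n₁) (Fin n₂) ℝ → ℝ)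
    (hconv : ∀ i, ConvexOn ℝ Set.univ (f i))
    (hLip : ∀ A B : Matrix (Fin n₁) (Fin n₂) ℝ,
      eNorm (fun i => f i A - f i B) ≤ L * frob (A - B))
    (hsaddle : ∃ (Xs : Matrix (Fin n₁) (Fin n₂) ℝ) (ys : Fin m → ℝ),
      (∀ i, 0 ≤ ys i) ∧
      (∀ y : Fin m → ℝ, (∀ i, 0 ≤ y i) →
        ftau τ Xs + ∑ i, y i * f i Xs ≤ ftau τ Xs + ∑ i, ys i * f i Xs) ∧
      (∀ X, ftau τ Xs + ∑ i, ys i * f i Xs ≤ ftau τ X + ∑ i, ys i * f i X))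
    (δ : ℕ → ℝ)
    (hδ : ∃ a b : ℝ, 0 < a ∧ b < 2 / L ^ 2 ∧ ∀ k, a ≤ δ k ∧ δ k ≤ b)
    (X : ℕ → Matrix (Fin n₁) (Fin n₂) ℝ) (y : ℕ → Fin m → ℝ)
    (hy0 : y 0 = 0)
    (hX : ∀ k, IsMinOn (fun Z => ftau τ Z + ∑ i, y k i * f i Z) Set.univ (X (k + 1)))
    (hy : ∀ k, y (k + 1) = fun i => max (y k i + δ (k + 1) * f i (X (k + 1))) 0) :
    ∃ Xopt : Matrix (Fin n₁) (Fin n₂) ℝ,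
      (∀ i, f i Xopt ≤ 0) ∧
      (∀ Z, (∀ i, f i Z ≤ 0) → ftau τ Xopt ≤ ftau τ Z) ∧
      (∀ Z, (∀ i, f i Z ≤ 0) → ftau τ Z = ftau τ Xopt → Z = Xopt) ∧
      Tendsto (fun k => X k) atTop (nhds Xopt) := by
  let _ := Matrix.frobeniusNormedAddCommGroup (m := Fin n₁) (n := Fin n₂) (α := ℝ)
  let _ := Matrix.frobeniusNormedSpace (m := Fin n₁) (n := Fin n₂) (R := ℝ) (α := ℝ)
  obtain ⟨Xs, ys, hys, hmax, hmin⟩ := hsaddle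
  have hsp : IsSaddlePoint (ftau τ) f Xs ys := ⟨hys, hmax, hmin⟩
  obtain ⟨a, b, ha, hb, hδ⟩ := hδ
  have hφ := strongConvexOn_ftau (n₁ := n₁) (n₂ := n₂) hτ.le
  have hLip' : ∀ A B, ∑ i, (f i A - f i B) ^ 2 ≤ L ^ 2 * ‖A - B‖ ^ 2 := fun A B => by
    rw [← sq_eNorm, ← frob_eq_norm, ← mul_pow]
    exact pow_le_pow_left₀ (Real.sqrt_nonneg _) (hLip A B) 2
  have hbL : b * L ^ 2 < 2 * 1 := by
    -- `2 / 0 ^ 2 = 0`, so the step-size bound excludes `L = 0`.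
    have hL : L ≠ 0 := by
      rintro rfl
      linarith [(hδ 0).1, (hδ 0).2, show 2 / (0 : ℝ) ^ 2 = 0 by simp]
    rw [lt_div_iff₀ (by positivity)] at hb
    linarith
  refine ⟨Xs, hsp.feasible, fun Z hZ => hsp.le_of_feasible hZ,
    fun Z hZ hZs => hsp.eq_of_feasible hφ one_pos hconv hZ hZs, ?_⟩
  exact hsp.tendsto_uzawa hφ hconv hLip' ha hbL hδ (by simp [hy0]) hX hy

/-- Uzawa/SVT iteration for general convex constraints. With
`F(X) = (f₁(X),…,f_m(X))` convex and `L`-Lipschitz, strong duality (existence of a saddle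
point with `y* ≥ 0`), and step sizes `0 < inf δ_k ≤ sup δ_k < 2/L²`, the iterates
`X^k = argmin_X f_τ(X) + ⟨y^{k-1}, F(X)⟩`, `y^k = [y^{k-1} + δ_k F(X^k)]₊` from `y⁰ = 0`
converge to the unique solution of: minimize `f_τ(X)` s.t. `f_i(X) ≤ 0` for all `i`. -/
theorem uzawa_convergence (n₁ n₂ m : ℕ) (τ L : ℝ) (hτ : 0 < τ) (hL : 0 ≤ L)
    (f : Fin m → Matrix (Fin n₁) (Fin n₂) ℝ → ℝ)
    (hconv : ∀ i, ConvexOn ℝ Set.univ (f i))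
    (hLip : ∀ A B : Matrix (Fin n₁) (Fin n₂) ℝ,
      eNorm (fun i => f i A - f i B) ≤ L * frob (A - B))
    (hsaddle : ∃ (Xs : Matrix (Fin n₁) (Fin n₂) ℝ) (ys : Fin m → ℝ),
      (∀ i, 0 ≤ ys i) ∧
      (∀ y : Fin m → ℝ, (∀ i, 0 ≤ y i) →
        ftau τ Xs + ∑ i, y i * f i Xs ≤ ftau τ Xs + ∑ i, ys i * f i Xs) ∧
      (∀ X, ftau τ Xs + ∑ i, ys i * f i Xs ≤ ftau τ X + ∑ i, ys i * f i X))
    (δ : ℕ → ℝ)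
    (hδ : ∃ a b : ℝ, 0 < a ∧ b < 2 / L ^ 2 ∧ ∀ k, a ≤ δ k ∧ δ k ≤ b)
    (X : ℕ → Matrix (Fin n₁) (Fin n₂) ℝ) (y : ℕ → Fin m → ℝ)
    (hy0 : y 0 = 0)
    (hX : ∀ k, IsMinOn (fun Z => ftau τ Z + ∑ i, y k i * f i Z) Set.univ (X (k + 1)))
    (hy : ∀ k, y (k + 1) = fun i => max (y k i + δ (k + 1) * f i (X (k + 1))) 0) :
    ∃ Xopt : Matrix (Fin n₁) (Fin n₂) ℝ,
      (∀ i, f i Xopt ≤ 0) ∧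
      (∀ Z, (∀ i, f i Z ≤ 0) → ftau τ Xopt ≤ ftau τ Z) ∧
      (∀ Z, (∀ i, f i Z ≤ 0) → ftau τ Z = ftau τ Xopt → Z = Xopt) ∧
      Tendsto (fun k => X k) atTop (nhds Xopt) :=
  uzawa_convergence_general n₁ n₂ m τ L hτ f hconv hLip hsaddle δ hδ X y hy0 hX hy
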